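/- Every open subset of the space κ^ω (with the product topology, κ discrete) is U-measurable. -/
import Mathlib


universe u

namespace UMeas

variable {A : Type u}

/-- The first `n` values of an infinite sequence, as a list. -/
def seg (s : ℕ → A) (n : ℕ) : List A := List.ofFn (fun i : Fin n => s i)

/-- `T` is a `U`-branching tree: a set of finite sequences closed under initial
segments, containing the empty sequence, whose branching sets are in `U`. -/
def IsUTree (U : Ultrafilter A) (T : Set (List A)) : Prop :=
  ([] ∈ T) ∧ (∀ σ ∈ T, ∀ τ : List A, τ <+: σ → τ ∈ T) ∧
    ∀ σ ∈ T, {a : A | σ ++ [a] ∈ T} ∈ U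

/-- The set of infinite branches through `T`. -/
def branches (T : Set (List A)) : Set (ℕ → A) := {s | ∀ n, seg s n ∈ T}

/-- Concatenation `σ⌢s` of a finite sequence with an infinite sequence. -/
def app (σ : List A) (s : ℕ → A) : ℕ → A :=
  fun n => if h : n < σ.length then σ.get ⟨n, h⟩ else s (n - σ.length)

/-- The section `X↾σ = {s | σ⌢s ∈ X}`. -/
def sect (X : Set (ℕ → A)) (σ : List A) : Set (ℕ → A) := {s | app σ s ∈ X}

def ULarge (U : Ultrafilter A) (X : Set (ℕ → A)) : Prop :=
  ∃ T, IsUTree U T ∧ branches T ⊆ X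

def USmall (U : Ultrafilter A) (X : Set (ℕ → A)) : Prop :=
  ∃ T, IsUTree U T ∧ branches T ∩ X = ∅

def UDetermined (U : Ultrafilter A) (X : Set (ℕ → A)) : Prop :=
  ULarge U X ∨ USmall U X

def UNull (U : Ultrafilter A) (X : Set (ℕ → A)) : Prop :=
  ∀ σ : List A, USmall U (sect X σ)

def UMeasurable (U : Ultrafilter A) (X : Set (ℕ → A)) : Prop :=
  ∀ σ : List A, UDetermined U (sect X σ)

end UMeas

namespace UMeas

variable {A : Type u}

lemma seg_zero (s : ℕ → A) : seg s 0 = [] := rfl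

lemma seg_succ (s : ℕ → A) (n : ℕ) :
    seg s (n + 1) = s 0 :: seg (fun k => s (k + 1)) n := by
  simp [seg, List.ofFn_succ]

lemma app_nil (s : ℕ → A) : app ([] : List A) s = s := by
  funext n; simp [app]

lemma app_concat (σ : List A) (s : ℕ → A) :
    app σ s = app (σ ++ [s 0]) (fun k => s (k + 1)) := by
  funext n
  simp only [app, List.length_append, List.length_singleton, List.get_eq_getElem]
  rcases lt_trichotomy n σ.length with h | h | h
  · rw [dif_pos h, dif_pos (by omega)]
    exact (List.getElem_append_left h).symm
  · subst h
    rw [dif_neg (lt_irrefl _), dif_pos (by omega)]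
    simp [List.getElem_concat_length]
  · rw [dif_neg (by omega), dif_neg (by omega)]
    congr 1
    omega

lemma app_seg (s t : ℕ → A) (n i : ℕ) (h : i < n) : app (seg s n) t i = s i := by
  have hlen : (seg s n).length = n := by simp [seg]
  simp only [app, hlen, dif_pos h, List.get_eq_getElem]
  simp [seg]

lemma utree_univ (U : Ultrafilter A) : IsUTree U (Set.univ : Set (List A)) :=
  ⟨trivial, fun _ _ _ _ => trivial, fun _ _ => Filter.univ_mem⟩

lemma continuous_app [TopologicalSpace A] (σ : List A) :
    Continuous (fun s => app σ s : (ℕ → A) → (ℕ → A)) := by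
  apply continuous_pi
  intro n
  by_cases h : n < σ.length
  · simp only [app, dif_pos h]
    exact continuous_const
  · simp only [app, dif_neg h]
    exact continuous_apply _

lemma open_not_large_small [TopologicalSpace A] [DiscreteTopology A]
    (U : Ultrafilter A) (Y : Set (ℕ → A)) (hY : IsOpen Y) (hnl : ¬ ULarge U Y) :
    USmall U Y := by
  classical
  refine ⟨{σ | ∀ τ, τ <+: σ → ¬ ULarge U (sect Y τ)}, ⟨?_, ?_, ?_⟩, ?_⟩
  · -- [] belongs
    intro τ hτ
    rw [List.prefix_nil.mp hτ]
    rintro ⟨T, hT, hb⟩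
    exact hnl ⟨T, hT, fun s hs => by simpa [sect, app_nil] using hb hs⟩
  · -- closed under prefixes
    intro σ hσ τ hτ ρ hρ
    exact hσ ρ (hρ.trans hτ)
  · -- branching
    intro σ hσ
    by_contra hBnot
    set B : Set A := {a | ULarge U (sect Y (σ ++ [a]))} with hBdef
    have hBc : B ∈ U := by
      have hcompl : {a : A | σ ++ [a] ∈ {σ | ∀ τ, τ <+: σ → ¬ ULarge U (sect Y τ)}}ᶜ ∈ U :=
        Ultrafilter.compl_mem_iff_notMem.mpr hBnot
      refine Filter.mem_of_superset hcompl ?_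
      intro a ha
      simp only [Set.mem_compl_iff, Set.mem_setOf_eq, not_forall] at ha
      obtain ⟨τ, hτpre, hτ⟩ := ha
      rw [not_not] at hτ
      rcases List.prefix_concat_iff.mp hτpre with h | h
      · subst h; exact hτ
      · exact absurd hτ (hσ τ h)
    have hch : ∀ a, ∃ T : Set (List A),
        a ∈ B → IsUTree U T ∧ branches T ⊆ sect Y (σ ++ [a]) := by
      intro a
      by_cases ha : a ∈ B
      · obtain ⟨T, hT, hb⟩ := ha
        exact ⟨T, fun _ => ⟨hT, hb⟩⟩
      · exact ⟨∅, fun h => absurd h ha⟩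
    choose T hT using hch
    set S : Set (List A) :=
      {l | l = [] ∨ ∃ a, a ∈ B ∧ ∃ τ, τ ∈ T a ∧ l = a :: τ} with hSdef
    have hStree : IsUTree U S := by
      refine ⟨Or.inl rfl, ?_, ?_⟩
      · rintro l (rfl | ⟨a, ha, ρ, hρ, rfl⟩) τ hτ
        · rw [List.prefix_nil.mp hτ]; exact Or.inl rfl
        · rcases List.prefix_cons_iff.mp hτ with rfl | ⟨t, rfl, ht⟩
          · exact Or.inl rfl
          · exact Or.inr ⟨a, ha, t, (hT a ha).1.2.1 ρ hρ t ht, rfl⟩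
      · rintro l (rfl | ⟨a, ha, ρ, hρ, rfl⟩)
        · refine Filter.mem_of_superset hBc ?_
          intro x hx
          exact Or.inr ⟨x, hx, [], (hT x hx).1.1, rfl⟩
        · refine Filter.mem_of_superset ((hT a ha).1.2.2 ρ hρ) ?_
          intro x hx
          exact Or.inr ⟨a, ha, ρ ++ [x], hx, rfl⟩
    have hSb : branches S ⊆ sect Y σ := by
      intro s hs
      have h1 : seg s 1 ∈ S := hs 1
      have hseg1 : seg s 1 = [s 0] := by rw [seg_succ, seg_zero]
      have hs0 : s 0 ∈ B := by
        rcases h1 with h | ⟨a, ha, τ, hτ, heq⟩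
        · rw [hseg1] at h; exact absurd h (List.cons_ne_nil _ _)
        · rw [hseg1] at heq
          obtain ⟨rfl, rfl⟩ := List.cons.inj heq.symm
          exact ha
      set t : ℕ → A := fun k => s (k + 1) with htdef
      have htb : t ∈ branches (T (s 0)) := by
        intro n
        have hn : seg s (n + 1) ∈ S := hs (n + 1)
        rw [seg_succ] at hn
        rcases hn with h | ⟨a, ha, τ, hτ, heq⟩
        · exact absurd h (List.cons_ne_nil _ _)
        · obtain ⟨rfl, rfl⟩ := List.cons.inj heq.symm
          exact hτ
      have := (hT (s 0) hs0).2 htb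
      simpa [sect, app_concat σ s] using this
    exact hσ σ List.prefix_rfl ⟨S, hStree, hSb⟩
  · -- branches ∩ Y = ∅
    apply Set.eq_empty_iff_forall_notMem.mpr
    rintro s ⟨hsT, hsY⟩
    obtain ⟨I, u, h1, h2⟩ := isOpen_pi_iff.mp hY s hsY
    set n : ℕ := (I.sup id) + 1 with hndef
    have hlarge : ULarge U (sect Y (seg s n)) := by
      refine ⟨Set.univ, utree_univ U, fun t _ => ?_⟩
      apply h2
      intro i hi
      have hin : i < n := by
        have : i ≤ I.sup id := Finset.le_sup (f := id) hi
        omega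
      rw [app_seg s t n i hin]
      exact (h1 i hi).2
    exact hsT n (seg s n) List.prefix_rfl hlarge

end UMeas

theorem stmt3 {A : Type u} [TopologicalSpace A] [DiscreteTopology A]
    (U : Ultrafilter A) (X : Set (ℕ → A)) (hX : IsOpen X) :
    UMeas.UMeasurable U X := by
  intro σ
  by_cases h : UMeas.ULarge U (UMeas.sect X σ)
  · exact Or.inl h
  · exact Or.inr (UMeas.open_not_large_small U (UMeas.sect X σ)
      (hX.preimage (UMeas.continuous_app σ)) h)
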